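/- Let L_x := L + G·L_{Q1} + G_{Q1}·L·l_{Q1}, fix λ_p ≥ 0, and set η₁ := 1/(2(2λ_p + L_x)). Fix c ∈ ℝ^m, x₀, x⁺, w, w_i ∈ ℝ^d, λ ∈ ℝ, and let g₀ := ∇_x f(Q̃_c(x))|_{x=x₀}. Suppose R is differentiable in its first argument and the first-order stationarity condition ∇f(x₀) + g₀ + λ_p·(x₀ − w_i) + (1/η₁)·(x⁺ − x₀) + λ·∇_x R(x⁺, c) = 0 holds. Then ‖∇_x F(x⁺)‖² ≤ 18·((5/3)·λ_p + L_x)²·‖x⁺ − x₀‖² + 2·λ_p²·‖w_i − w‖², where F(x) := f(x) + f(Q̃_c(x)) + λ·R(x, c) + (λ_p/2)·‖x − w‖², so that ∇_x F(x) = ∇f(x) + ∇_x f(Q̃_c(x)) + λ·∇_x R(x, c) + λ_p·(x − w). -/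

import Mathlib

/-! The stationarity condition expresses `∇_x F(x⁺)` as the increment of `∇f + ∇(f ∘ Q̃_c)`
between `x₀` and `x⁺`, plus `(λ_p - 1/η₁)(x⁺ - x₀) = -(3λ_p + 2L_x)(x⁺ - x₀)`, plus
`λ_p (w_i - w)`. By the product rule `D(f ∘ Q̃_c)(x) = Df(Q̃_c x) ∘ DQ̃_c(x)`, the composite
gradient is `(G L_{Q1} + G_{Q1} L l_{Q1})`-Lipschitz, so the first part is at most
`L_x ‖x⁺ - x₀‖`. This gives `‖∇_x F(x⁺)‖ ≤ 3(λ_p + L_x)‖x⁺ - x₀‖ + λ_p‖w_i - w‖`, and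
`(a + b)² ≤ 2a² + 2b²` finishes. -/

open InnerProductSpace

section Gradient

variable {E : Type*} [NormedAddCommGroup E] [InnerProductSpace ℝ E] [CompleteSpace E]

theorem norm_gradient (f : E → ℝ) (x : E) : ‖gradient f x‖ = ‖fderiv ℝ f x‖ :=
  (toDual ℝ E).symm.norm_map _

theorem norm_gradient_sub_gradient (f : E → ℝ) (x y : E) :
    ‖gradient f x - gradient f y‖ = ‖fderiv ℝ f x - fderiv ℝ f y‖ := by
  rw [gradient, gradient, ← map_sub, LinearIsometryEquiv.norm_map]

end Gradient

section Composition

variable {E F H : Type*} [NormedAddCommGroup E] [NormedSpace ℝ E]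
  [NormedAddCommGroup F] [NormedSpace ℝ F] [NormedAddCommGroup H] [NormedSpace ℝ H]

theorem norm_fderiv_comp_sub_le {f : F → H} {Q : E → F} {G L lQ LQ GQ : ℝ}
    (hf : Differentiable ℝ f) (hQ : Differentiable ℝ Q)
    (hfG : ∀ y, ‖fderiv ℝ f y‖ ≤ G)
    (hfL : ∀ y y', ‖fderiv ℝ f y - fderiv ℝ f y'‖ ≤ L * ‖y - y'‖) (hL : 0 ≤ L)
    (hQl : ∀ x x', ‖Q x - Q x'‖ ≤ lQ * ‖x - x'‖)
    (hQL : ∀ x x', ‖fderiv ℝ Q x - fderiv ℝ Q x'‖ ≤ LQ * ‖x - x'‖)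
    (hQG : ∀ x, ‖fderiv ℝ Q x‖ ≤ GQ) (x x' : E) :
    ‖fderiv ℝ (fun z => f (Q z)) x - fderiv ℝ (fun z => f (Q z)) x'‖
      ≤ (G * LQ + GQ * L * lQ) * ‖x - x'‖ := by
  rw [fderiv_fun_comp x (hf _) (hQ x), fderiv_fun_comp x' (hf _) (hQ x')]
  set A := fderiv ℝ f (Q x)
  set A' := fderiv ℝ f (Q x')
  set B := fderiv ℝ Q x
  set B' := fderiv ℝ Q x'
  have hsplit : A.comp B - A'.comp B' = (A - A').comp B + A'.comp (B - B') := by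
    ext v; simp
  have hA : ‖A - A'‖ ≤ L * lQ * ‖x - x'‖ := calc
    ‖A - A'‖ ≤ L * ‖Q x - Q x'‖ := hfL _ _
    _ ≤ L * (lQ * ‖x - x'‖) := mul_le_mul_of_nonneg_left (hQl x x') hL
    _ = L * lQ * ‖x - x'‖ := by ring
  have hG : 0 ≤ G := (norm_nonneg _).trans (hfG 0)
  calc ‖A.comp B - A'.comp B'‖
      ≤ ‖A - A'‖ * ‖B‖ + ‖A'‖ * ‖B - B'‖ := by
        rw [hsplit]
        exact (norm_add_le _ _).trans
          (add_le_add (ContinuousLinearMap.opNorm_comp_le _ _)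
            (ContinuousLinearMap.opNorm_comp_le _ _))
    _ ≤ L * lQ * ‖x - x'‖ * GQ + G * (LQ * ‖x - x'‖) := by
        gcongr
        · exact (norm_nonneg _).trans hA
        exacts [hQG x, hfG _, hQL x x']
    _ = (G * LQ + GQ * L * lQ) * ‖x - x'‖ := by ring

end Composition

theorem norm_sub_smul_add_smul_sq_le {V : Type*} [SeminormedAddCommGroup V] [NormedSpace ℝ V]
    {g u e : V} {K μ : ℝ} (hμ : 0 ≤ μ) (hg : ‖g‖ ≤ K * ‖u‖) :
    ‖g - (3 * μ + 2 * K) • u + μ • e‖ ^ 2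
      ≤ 18 * (5 / 3 * μ + K) ^ 2 * ‖u‖ ^ 2 + 2 * μ ^ 2 * ‖e‖ ^ 2 := by
  have hKu : 0 ≤ K * ‖u‖ := (norm_nonneg _).trans hg
  have hsmul : ‖(3 * μ + 2 * K) • u‖ = 3 * μ * ‖u‖ + 2 * (K * ‖u‖) := by
    rw [norm_smul, Real.norm_eq_abs, ← abs_norm u, ← abs_mul, abs_norm,
      abs_of_nonneg (by nlinarith [norm_nonneg u])]
    ring
  have hle : ‖g - (3 * μ + 2 * K) • u + μ • e‖ ≤ 3 * (5 / 3 * μ + K) * ‖u‖ + μ * ‖e‖ := calc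
    _ ≤ ‖g‖ + ‖(3 * μ + 2 * K) • u‖ + ‖μ • e‖ :=
        (norm_add_le _ _).trans (add_le_add_left (norm_sub_le _ _) _)
    _ ≤ _ := by
        rw [hsmul, norm_smul, Real.norm_of_nonneg hμ]
        nlinarith [norm_nonneg u]
  nlinarith [norm_nonneg (g - (3 * μ + 2 * K) • u + μ • e),
    sq_nonneg (3 * (5 / 3 * μ + K) * ‖u‖ - μ * ‖e‖)]

theorem stmt_16_general
    {d m : ℕ}
    (f : EuclideanSpace ℝ (Fin d) → ℝ)
    (Qt : EuclideanSpace ℝ (Fin d) → EuclideanSpace ℝ (Fin m) → EuclideanSpace ℝ (Fin d))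
    (R : EuclideanSpace ℝ (Fin d) → EuclideanSpace ℝ (Fin m) → ℝ)
    (G L lQ1 LQ1 GQ1 : ℝ)
    (hf : Differentiable ℝ f)
    (hfG : ∀ x, ‖gradient f x‖ ≤ G)
    (hfL : ∀ x y, ‖gradient f x - gradient f y‖ ≤ L * ‖x - y‖)
    (hQd1 : ∀ c, Differentiable ℝ (fun x => Qt x c))
    (hQl1 : ∀ c x y, ‖Qt x c - Qt y c‖ ≤ lQ1 * ‖x - y‖)
    (hQL1 : ∀ c x y,
      ‖fderiv ℝ (fun z => Qt z c) x - fderiv ℝ (fun z => Qt z c) y‖ ≤ LQ1 * ‖x - y‖)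
    (hQG1 : ∀ c x, ‖fderiv ℝ (fun z => Qt z c) x‖ ≤ GQ1)
    (lam_p : ℝ) (hlam_p : 0 ≤ lam_p)
    (Lx η₁ : ℝ)
    (hLx : Lx = L + G * LQ1 + GQ1 * L * lQ1)
    (hη₁ : η₁ = 1 / (2 * (2 * lam_p + Lx)))
    (c : EuclideanSpace ℝ (Fin m)) (x₀ xp w wi : EuclideanSpace ℝ (Fin d)) (lam : ℝ)
    (hstat : gradient f x₀ + gradient (fun y => f (Qt y c)) x₀
        + lam_p • (x₀ - wi) + (1 / η₁) • (xp - x₀)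
        + lam • gradient (fun z => R z c) xp = 0) :
    ‖gradient f xp + gradient (fun y => f (Qt y c)) xp
        + lam • gradient (fun z => R z c) xp + lam_p • (xp - w)‖ ^ 2
      ≤ 18 * (5 / 3 * lam_p + Lx) ^ 2 * ‖xp - x₀‖ ^ 2
        + 2 * lam_p ^ 2 * ‖wi - w‖ ^ 2 := by
  have hinv : 1 / η₁ = 2 * (2 * lam_p + Lx) := by rw [hη₁, one_div_one_div]
  have hrepr : gradient f xp + gradient (fun y => f (Qt y c)) xp
        + lam • gradient (fun z => R z c) xp + lam_p • (xp - w)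
      = ((gradient f xp - gradient f x₀)
          + (gradient (fun y => f (Qt y c)) xp - gradient (fun y => f (Qt y c)) x₀))
        - (3 * lam_p + 2 * Lx) • (xp - x₀) + lam_p • (wi - w) := by
    rw [eq_neg_of_add_eq_zero_right hstat, hinv]; module
  have hincr : ‖(gradient f xp - gradient f x₀)
      + (gradient (fun y => f (Qt y c)) xp - gradient (fun y => f (Qt y c)) x₀)‖
      ≤ Lx * ‖xp - x₀‖ := by
    rcases eq_or_ne xp x₀ with rfl | hne
    · simp
    have hL : 0 ≤ L := nonneg_of_mul_nonneg_left ((norm_nonneg _).trans (hfL xp x₀))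
      (norm_pos_iff.2 (sub_ne_zero.2 hne))
    have hcomp := norm_fderiv_comp_sub_le hf (hQd1 c) (fun y => norm_gradient f y ▸ hfG y)
      (fun y y' => norm_gradient_sub_gradient f y y' ▸ hfL y y') hL (hQl1 c) (hQL1 c) (hQG1 c)
      xp x₀
    rw [← norm_gradient_sub_gradient] at hcomp
    rw [hLx]
    linarith [norm_add_le (gradient f xp - gradient f x₀)
      (gradient (fun y => f (Qt y c)) xp - gradient (fun y => f (Qt y c)) x₀), hfL xp x₀]
  rw [hrepr]
  exact norm_sub_smul_add_smul_sq_le hlam_p hincr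

/-- Gradient bound after the proximal step in `x` (personalized/federated
setting): under the first-order stationarity condition of the proximal update
with `η₁ = 1/(2(2λ_p + L_x))`, the partial gradient in `x` of the local
objective `F` at `x⁺` satisfies
`‖∇_x F(x⁺)‖² ≤ 18((5/3)λ_p + L_x)²‖x⁺ − x₀‖² + 2λ_p²‖w_i − w‖²`. -/
theorem stmt_16
    {d m : ℕ}
    (f : EuclideanSpace ℝ (Fin d) → ℝ)
    (Qt : EuclideanSpace ℝ (Fin d) → EuclideanSpace ℝ (Fin m) → EuclideanSpace ℝ (Fin d))
    (R : EuclideanSpace ℝ (Fin d) → EuclideanSpace ℝ (Fin m) → ℝ)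
    (G L lQ1 LQ1 GQ1 : ℝ)
    (hf : Differentiable ℝ f)
    (hfG : ∀ x, ‖gradient f x‖ ≤ G)
    (hfL : ∀ x y, ‖gradient f x - gradient f y‖ ≤ L * ‖x - y‖)
    (hQd1 : ∀ c, Differentiable ℝ (fun x => Qt x c))
    (hQl1 : ∀ c x y, ‖Qt x c - Qt y c‖ ≤ lQ1 * ‖x - y‖)
    (hQL1 : ∀ c x y,
      ‖fderiv ℝ (fun z => Qt z c) x - fderiv ℝ (fun z => Qt z c) y‖ ≤ LQ1 * ‖x - y‖)
    (hQG1 : ∀ c x, ‖fderiv ℝ (fun z => Qt z c) x‖ ≤ GQ1)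
    (hRd1 : ∀ c, Differentiable ℝ (fun x => R x c))
    (lam_p : ℝ) (hlam_p : 0 ≤ lam_p)
    (Lx η₁ : ℝ)
    (hLx : Lx = L + G * LQ1 + GQ1 * L * lQ1)
    (hη₁ : η₁ = 1 / (2 * (2 * lam_p + Lx)))
    (c : EuclideanSpace ℝ (Fin m)) (x₀ xp w wi : EuclideanSpace ℝ (Fin d)) (lam : ℝ)
    (hstat : gradient f x₀ + gradient (fun y => f (Qt y c)) x₀
        + lam_p • (x₀ - wi) + (1 / η₁) • (xp - x₀)
        + lam • gradient (fun z => R z c) xp = 0) :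
    ‖gradient f xp + gradient (fun y => f (Qt y c)) xp
        + lam • gradient (fun z => R z c) xp + lam_p • (xp - w)‖ ^ 2
      ≤ 18 * (5 / 3 * lam_p + Lx) ^ 2 * ‖xp - x₀‖ ^ 2
        + 2 * lam_p ^ 2 * ‖wi - w‖ ^ 2 :=
  stmt_16_general f Qt R G L lQ1 LQ1 GQ1 hf hfG hfL hQd1 hQl1 hQL1 hQG1 lam_p hlam_p Lx η₁ hLx hη₁ c
    x₀ xp w wi lam hstat
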